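/- arXiv:math/0010127 — 2 statements merged into one kernel-verified Lean document; each statement's English description precedes it below -/
import Mathlib

section
/- The map sending j to ε_j' = ε_j · ε_i^{-C_{j,i}} (where C is a Cartan matrix of a root system and ε ∈ {±1}^l) defines an action of the simple reflection s_{α_i} on the set {±1}^l, and these actions extend to an action of the Weyl group on {±1}^l. -/
open CoxeterSystem

/-- The sign reflection `σᵢ` associated with a simple root `αᵢ`: it sends a sign vector
`ε ∈ {±1}^l` to the sign vector `ε'` with `ε'_j = ε_j · εᵢ^{-C_{j,i}}`, where `C` is the
Cartan matrix. -/
def signReflection {l : ℕ} (C : Fin l → Fin l → ℤ) (i : Fin l) :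
    Function.End (Fin l → ℤˣ) :=
  fun ε j => ε j * (ε i) ^ (-(C j i))

lemma upow (u : ℤˣ) (n : ℤ) : u ^ n = if Even n then 1 else u := by
  have h2 : u ^ (2 : ℤ) = 1 := by rcases Int.units_eq_one_or u with rfl | rfl <;> decide
  rcases Int.even_or_odd n with ⟨k, hk⟩ | ⟨k, hk⟩
  · rw [if_pos ⟨k, hk⟩, hk, ← two_mul, zpow_mul, h2, one_zpow]
  · rw [if_neg (Int.not_even_iff_odd.2 ⟨k, hk⟩), hk, zpow_add, zpow_mul, h2, one_zpow,
      zpow_one, one_mul]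

section comput

variable {l : ℕ} (C : Fin l → Fin l → ℤ) (i j : Fin l)

lemma sign_invol (hii : Even (C i i)) :
    signReflection C i * signReflection C i = 1 := by
  funext ε k
  show signReflection C i (signReflection C i ε) k = ε k
  simp only [signReflection, upow, even_neg, hii, if_pos]
  split_ifs <;>
    rcases Int.units_eq_one_or (ε i) with h | h <;> simp [h]

lemma sign_ee (hii : Even (C i i)) (hjj : Even (C j j))
    (ha : Even (C i j)) (hb : Even (C j i)) :
    (signReflection C i * signReflection C j) ^ 2 = 1 := by
  funext ε k
  show signReflection C i (signReflection C j (signReflection C i (signReflection C j ε))) k = ε k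
  simp only [signReflection, upow, even_neg, hii, hjj, ha, hb, if_pos]
  split_ifs <;>
    rcases Int.units_eq_one_or (ε i) with h | h <;>
    rcases Int.units_eq_one_or (ε j) with h' | h' <;> simp [h, h']

lemma sign_oo (hii : Even (C i i)) (hjj : Even (C j j))
    (ha : ¬ Even (C i j)) (hb : ¬ Even (C j i)) :
    (signReflection C i * signReflection C j) ^ 3 = 1 := by
  funext ε k
  show signReflection C i (signReflection C j (signReflection C i (signReflection C j
    (signReflection C i (signReflection C j ε))))) k = ε k
  simp only [signReflection, upow, even_neg, hii, hjj, ha, hb, if_pos, if_neg, if_false]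
  split_ifs <;>
    rcases Int.units_eq_one_or (ε i) with h | h <;>
    rcases Int.units_eq_one_or (ε j) with h' | h' <;> simp [h, h']

lemma sign_eo (hii : Even (C i i)) (hjj : Even (C j j))
    (ha : Even (C i j)) (hb : ¬ Even (C j i)) :
    (signReflection C i * signReflection C j) ^ 4 = 1 := by
  funext ε k
  show signReflection C i (signReflection C j (signReflection C i (signReflection C j
    (signReflection C i (signReflection C j (signReflection C i (signReflection C j ε)))))))
      k = ε k
  simp only [signReflection, upow, even_neg, hii, hjj, ha, hb, if_pos, if_neg, if_false]
  split_ifs <;>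
    rcases Int.units_eq_one_or (ε i) with h | h <;>
    rcases Int.units_eq_one_or (ε j) with h' | h' <;> simp [h, h']

end comput

/-- In a monoid, if `x * x = 1` then `(y * x) ^ n = x * (x * y) ^ n * x`. -/
lemma swap_pow {G : Type*} [Monoid G] {x y : G} (hx : x * x = 1) (n : ℕ) :
    (y * x) ^ n = x * (x * y) ^ n * x := by
  induction n with
  | zero => simp [hx]
  | succ n ih =>
      rw [pow_succ, ih, pow_succ]
      simp [mul_assoc]

/-- Let `C` be a (crystallographic) Cartan matrix of a root system of rank `l`, with
`C i i = 2`, off-diagonal entries nonpositive, and `C i j = 0 ↔ C j i = 0`; let `W` be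
the corresponding Weyl group, i.e. a Coxeter group whose Coxeter matrix `M` satisfies
the standard dictionary `C i j * C j i ∈ {0,1,2,3} ↦ M i j ∈ {2,3,4,6}` off the
diagonal.  Then the maps `σᵢ : ε ↦ (ε_j εᵢ^{-C_{j,i}})_j` on `{±1}^l` satisfy the
defining relations of `W`, i.e. they extend to an action of `W` on `{±1}^l`:
there is a monoid homomorphism `W →* End({±1}^l)` sending each simple reflection
`s_{αᵢ}` to `σᵢ`. -/
theorem weyl_group_sign_action {l : ℕ} {W : Type*} [Group W]
    {M : CoxeterMatrix (Fin l)} (cs : CoxeterSystem M W)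
    (C : Fin l → Fin l → ℤ)
    (hdiag : ∀ i, C i i = 2)
    (hoff : ∀ i j, i ≠ j → C i j ≤ 0)
    (hzero : ∀ i j, C i j = 0 ↔ C j i = 0)
    (hM : ∀ i j, i ≠ j →
      (C i j * C j i = 0 ∧ M i j = 2) ∨ (C i j * C j i = 1 ∧ M i j = 3) ∨
      (C i j * C j i = 2 ∧ M i j = 4) ∨ (C i j * C j i = 3 ∧ M i j = 6)) :
    ∃ φ : W →* Function.End (Fin l → ℤˣ),
      ∀ i : Fin l, φ (cs.simple i) = signReflection C i := by
  have hEdiag : ∀ i, Even (C i i) := fun i => by rw [hdiag]; exact even_two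
  have hlift : M.IsLiftable (signReflection C) := by
    intro i j
    rcases eq_or_ne i j with rfl | hij
    · rw [M.diagonal, pow_one]
      exact sign_invol C i (hEdiag i)
    rcases hM i j hij with ⟨h0, hm⟩ | ⟨h1, hm⟩ | ⟨h2, hm⟩ | ⟨h3, hm⟩
    · -- product 0 : both entries are 0, both even
      rcases mul_eq_zero.1 h0 with h | h
      · have h' : C j i = 0 := (hzero i j).1 h
        rw [hm]
        exact sign_ee C i j (hEdiag i) (hEdiag j) (by simp [h]) (by simp [h'])
      · have h' : C i j = 0 := (hzero j i).1 h
        rw [hm]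
        exact sign_ee C i j (hEdiag i) (hEdiag j) (by simp [h']) (by simp [h])
    · -- product 1 : both odd
      have hodd := (Int.odd_mul).1 (h1 ▸ odd_one)
      rw [hm]
      exact sign_oo C i j (hEdiag i) (hEdiag j)
        (Int.not_even_iff_odd.2 hodd.1) (Int.not_even_iff_odd.2 hodd.2)
    · -- product 2 : exactly one even
      rw [hm]
      rcases Int.even_or_odd (C i j) with ha | ha <;>
        rcases Int.even_or_odd (C j i) with hb | hb
      · exfalso
        obtain ⟨a, ha'⟩ := ha
        obtain ⟨b, hb'⟩ := hb
        rw [ha', hb'] at h2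
        have hd : (4 : ℤ) ∣ 2 := ⟨a * b, by linear_combination -h2⟩
        norm_num at hd
      · exact sign_eo C i j (hEdiag i) (hEdiag j) ha (Int.not_even_iff_odd.2 hb)
      · -- swap
        have h4 : (signReflection C j * signReflection C i) ^ 4 = 1 :=
          sign_eo C j i (hEdiag j) (hEdiag i) hb (Int.not_even_iff_odd.2 ha)
        have hinv := sign_invol C j (hEdiag j)
        rw [swap_pow hinv 4, h4, mul_one, hinv]
      · exfalso
        have : Odd (C i j * C j i) := (Int.odd_mul).2 ⟨ha, hb⟩
        rw [h2] at this
        exact (by decide : ¬ Odd (2 : ℤ)) this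
    · -- product 3 : both odd, order 6
      have hodd := (Int.odd_mul).1 (h3 ▸ (by decide : Odd (3 : ℤ)))
      rw [hm, show (6 : ℕ) = 3 * 2 from rfl, pow_mul,
        sign_oo C i j (hEdiag i) (hEdiag j)
          (Int.not_even_iff_odd.2 hodd.1) (Int.not_even_iff_odd.2 hodd.2), one_pow]
  exact ⟨cs.lift ⟨signReflection C, hlift⟩, fun i => cs.lift_apply_simple hlift i⟩
end

section
/- The map (S, η, [w]) ↦ cell gives, in total, Σ_{S ⊆ Π} 2^{|S|} · |W/W_S| cells in the decomposition of Ĥ_ℝ; for type A_2 this total is 4·1 + 4·3 + 1·6 = 22, and the alternating sum by codimension 6 − 12 + 4 = −2 equals the Euler characteristic of Ĥ_ℝ. -/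


local notation "s1" => Equiv.swap (0 : Fin 3) 1
local notation "s2" => Equiv.swap (1 : Fin 3) 2

lemma cardG : Nat.card (Equiv.Perm (Fin 3)) = 6 := by
  rw [Nat.card_eq_fintype_card]; decide

lemma idx_bot : (Subgroup.closure (∅ : Set (Equiv.Perm (Fin 3)))).index = 6 := by
  rw [Subgroup.closure_empty, Subgroup.index_bot, cardG]

lemma idx_swap (a b : Fin 3) (hab : a ≠ b) :
    (Subgroup.closure ({Equiv.swap a b} : Set (Equiv.Perm (Fin 3)))).index = 3 := by
  have h1 : Nat.card (Subgroup.closure ({Equiv.swap a b} : Set (Equiv.Perm (Fin 3)))) = 2 := by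
    rw [← Subgroup.zpowers_eq_closure, Nat.card_zpowers]
    exact orderOf_eq_prime (by rw [pow_two, Equiv.swap_mul_self]) (fun h => hab (Equiv.swap_eq_one_iff.mp h))
  have := Subgroup.card_mul_index (Subgroup.closure ({Equiv.swap a b} : Set (Equiv.Perm (Fin 3))))
  rw [h1, cardG] at this
  omega

lemma idx_top : (Subgroup.closure ({s1, s2} : Set (Equiv.Perm (Fin 3)))).index = 1 := by
  rw [show Subgroup.closure ({s1, s2} : Set (Equiv.Perm (Fin 3))) = ⊤ from ?_,
    Subgroup.index_top]
  have h1 : s1 ∈ Subgroup.closure ({s1, s2} : Set (Equiv.Perm (Fin 3))) :=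
    Subgroup.subset_closure (by simp)
  have h2 : s2 ∈ Subgroup.closure ({s1, s2} : Set (Equiv.Perm (Fin 3))) :=
    Subgroup.subset_closure (by simp)
  rw [eq_top_iff, ← Equiv.Perm.closure_isSwap, Subgroup.closure_le]
  rintro σ ⟨x, y, hxy, rfl⟩
  have key : ∀ x y : Fin 3, x ≠ y →
      Equiv.swap x y = s1 ∨ Equiv.swap x y = s2 ∨ Equiv.swap x y = s1 * s2 * s1 := by
    decide
  rcases key x y hxy with h | h | h <;> rw [h]
  · exact h1
  · exact h2
  · exact mul_mem (mul_mem h1 h2) h1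

/-- Total number of cells `∑_{S ⊆ Π} 2^{|S|} |W/W_S|` in the cell decomposition of
`Ĥ_ℝ` for type `A_2` (`W = S_3`, with `W_S` the standard parabolic generated by the
simple transpositions indexed by `S`): the total is `4·1 + 4·3 + 1·6 = 22` and the
alternating sum by codimension `6 - 12 + 4 = -2` is the Euler characteristic. -/
theorem a2_total_cells :
    (∑ S : Finset (Fin 2), 2 ^ S.card *
      (Subgroup.closure ((S.image (fun i : Fin 2 =>
        if i = 0 then Equiv.swap (0 : Fin 3) 1 else Equiv.swap (1 : Fin 3) 2)) :
        Set (Equiv.Perm (Fin 3)))).index) = 22 ∧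
    (∑ S : Finset (Fin 2), (-1 : ℤ) ^ (2 - S.card) * (2 ^ S.card *
      (Subgroup.closure ((S.image (fun i : Fin 2 =>
        if i = 0 then Equiv.swap (0 : Fin 3) 1 else Equiv.swap (1 : Fin 3) 2)) :
        Set (Equiv.Perm (Fin 3)))).index)) = -2 ∧
    (6 : ℤ) - 12 + 4 = -2 := by
  have huniv : (Finset.univ : Finset (Finset (Fin 2))) = {∅, {0}, {1}, {0, 1}} := by decide
  have h0 : ((((∅ : Finset (Fin 2)).image (fun i : Fin 2 =>
      if i = 0 then s1 else s2)) : Finset (Equiv.Perm (Fin 3))) : Set (Equiv.Perm (Fin 3)))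
      = (∅ : Set (Equiv.Perm (Fin 3))) := by simp
  have h1 : (((({0} : Finset (Fin 2)).image (fun i : Fin 2 =>
      if i = 0 then s1 else s2)) : Finset (Equiv.Perm (Fin 3))) : Set (Equiv.Perm (Fin 3)))
      = ({s1} : Set (Equiv.Perm (Fin 3))) := by simp
  have h2 : (((({1} : Finset (Fin 2)).image (fun i : Fin 2 =>
      if i = 0 then s1 else s2)) : Finset (Equiv.Perm (Fin 3))) : Set (Equiv.Perm (Fin 3)))
      = ({s2} : Set (Equiv.Perm (Fin 3))) := by simp
  have h01 : (((({0, 1} : Finset (Fin 2)).image (fun i : Fin 2 =>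
      if i = 0 then s1 else s2)) : Finset (Equiv.Perm (Fin 3))) : Set (Equiv.Perm (Fin 3)))
      = ({s1, s2} : Set (Equiv.Perm (Fin 3))) := by
    rw [Finset.image_insert, Finset.image_singleton]; simp
  refine ⟨?_, ?_, by norm_num⟩ <;>
  · rw [huniv, Finset.sum_insert (by decide), Finset.sum_insert (by decide),
      Finset.sum_insert (by decide), Finset.sum_singleton, h0, h1, h2, h01,
      idx_bot, idx_swap 0 1 (by decide), idx_swap 1 2 (by decide), idx_top]
    norm_num
end
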